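/- Let p : G̃ → G be a universal covering of a connected groupoid G and Π a subgroup of Cov(G̃/G). Then the fundamental group of the orbit groupoid G̃/Π at any object is isomorphic to Π. -/

import Mathlib

open CategoryTheory

/-- The costar `t(x)`: the set of all arrows with codomain `x`. -/
def Costar {G : Type*} [Groupoid G] (x : G) := Σ y : G, y ⟶ x

/-- The map `t(x) → t(p x)` induced by a functor `p`. -/
def costarMap {H G : Type*} [Groupoid H] [Groupoid G] (p : H ⥤ G) (x : H) :
    Costar x → Costar (p.obj x) := fun f => ⟨p.obj f.1, p.map f.2⟩

/-- `p` is a covering projection of groupoids. -/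
def IsCoveringProjection {H G : Type*} [Groupoid H] [Groupoid G] (p : H ⥤ G) : Prop :=
  ∀ x : H, Function.Bijective (costarMap p x)

/-- A groupoid is connected if any two objects are joined by an arrow. -/
def IsConnectedGroupoid (G : Type*) [Groupoid G] : Prop := ∀ x y : G, Nonempty (x ⟶ y)

/-- The induced homomorphism on vertex (fundamental) groups. -/
def vertexHom {H G : Type*} [Groupoid H] [Groupoid G] (p : H ⥤ G) (x : H) :
    (x ⟶ x) →* (p.obj x ⟶ p.obj x) where
  toFun := p.map
  map_one' := p.map_id x
  map_mul' f g := p.map_comp f g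

/-- A covering projection is regular if every image vertex subgroup is normal. -/
def IsRegularCovering {Gt G : Type*} [Groupoid Gt] [Groupoid G] (p : Gt ⥤ G) : Prop :=
  ∀ x : Gt, ((vertexHom p x).range).Normal

/-- A covering transformation: an automorphism of the total groupoid over the base. -/
def IsCoveringTransformation {Gt G : Type*} [Groupoid Gt] [Groupoid G] (p : Gt ⥤ G)
    (h : Gt ⥤ Gt) : Prop :=
  (∃ k : Gt ⥤ Gt, h ⋙ k = 𝟭 Gt ∧ k ⋙ h = 𝟭 Gt) ∧ h ⋙ p = p

/-- The group `Cov(G̃/G)` of covering transformations, as a subgroup of the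
automorphism group of `G̃` in `Cat`. -/
def covGroup {Gt G : Type*} [Groupoid Gt] [Groupoid G] (p : Gt ⥤ G) :
    Subgroup (Aut (Cat.of Gt)) where
  carrier := {h | h.hom.toFunctor ⋙ p = p}
  one_mem' := rfl
  mul_mem' := by
    intro a b ha hb
    show (b.hom.toFunctor ⋙ a.hom.toFunctor) ⋙ p = p
    refine (Functor.assoc _ _ _).trans ?_
    show b.hom.toFunctor ⋙ (a.hom.toFunctor ⋙ p) = p
    exact (congrArg (Functor.comp b.hom.toFunctor) ha).trans hb
  inv_mem' := by
    intro a ha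
    show a.inv.toFunctor ⋙ p = p
    conv_lhs => rw [← ha]
    show a.inv.toFunctor ⋙ a.hom.toFunctor ⋙ p = p
    refine (Functor.assoc _ _ _).symm.trans ?_
    have : (a.inv.toFunctor ⋙ a.hom.toFunctor) = 𝟭 _ := congrArg Cat.Hom.toFunctor a.inv_hom_id
    exact (congrArg (· ⋙ p) this).trans rfl

/-- A universal covering: a connected covering projection whose total groupoid
has trivial vertex groups. -/
def IsUniversalCovering {Gt G : Type*} [Groupoid Gt] [Groupoid G] (p : Gt ⥤ G) : Prop :=
  IsCoveringProjection p ∧ IsConnectedGroupoid Gt ∧ IsConnectedGroupoid G ∧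
    ∀ (x : Gt) (f : x ⟶ x), f = 𝟙 x

/-- A group action (by functors) on a groupoid is free if no non-identity element
fixes an object. -/
def FreeGroupoidAction {Γ : Type*} [Group Γ] {G : Type} [Groupoid.{0} G]
    (φ : Γ →* Aut (Cat.of G)) : Prop :=
  ∀ γ : Γ, γ ≠ 1 → ∀ x : G, (φ γ).hom.toFunctor.obj x ≠ x

/-- `(Q, q)` is an orbit groupoid of the action `φ` of `Γ` on `G`: the orbit
morphism `q` coequalizes the action and is universal with this property. -/
def IsOrbitGroupoid {Γ : Type*} [Group Γ] {G : Type} [Groupoid.{0} G]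
    (φ : Γ →* Aut (Cat.of G)) {Q : Type} [Groupoid.{0} Q] (q : G ⥤ Q) : Prop :=
  (∀ γ : Γ, (φ γ).hom.toFunctor ⋙ q = q) ∧
  ∀ (H : Type) (_ : Groupoid.{0} H) (f : G ⥤ H), (∀ γ : Γ, (φ γ).hom.toFunctor ⋙ f = f) →
    ∃! f' : Q ⥤ H, q ⋙ f' = f

/-!
Trivial vertex groups and connectedness leave exactly one arrow between any two objects of `G̃`.
A covering transformation fixing one object fixes all of them (arrows into that object lift
uniquely), so it is the identity and `Π` acts freely. For a free action on such a groupoid the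
orbit groupoid has an explicit model: its objects are the orbits, every hom-set is `Π`, and an
arrow `x ⟶ y` is sent to `toRep x * (toRep y)⁻¹`, where `toRep x` moves `x` to the chosen
representative of its orbit. Orbit groupoids are unique up to equivalence, and an equivalence
carries the vertex groups of the model, all equal to `Π`, to those of `G̃/Π`.
-/

open CategoryTheory

namespace IsOrbitGroupoid

variable {Γ : Type*} [Group Γ] {G : Type} [Groupoid.{0} G] {φ : Γ →* Aut (Cat.of G)}
  {Q : Type} [Groupoid.{0} Q] {q : G ⥤ Q}

noncomputable def desc (hq : IsOrbitGroupoid φ q) {H : Type} [Groupoid.{0} H] (f : G ⥤ H)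
    (hf : ∀ γ : Γ, (φ γ).hom.toFunctor ⋙ f = f) : Q ⥤ H :=
  (hq.2 H inferInstance f hf).exists.choose

theorem fac (hq : IsOrbitGroupoid φ q) {H : Type} [Groupoid.{0} H] (f : G ⥤ H)
    (hf : ∀ γ : Γ, (φ γ).hom.toFunctor ⋙ f = f) : q ⋙ hq.desc f hf = f :=
  (hq.2 H inferInstance f hf).exists.choose_spec

theorem hom_ext (hq : IsOrbitGroupoid φ q) {H : Type} [Groupoid.{0} H] {f₁ f₂ : Q ⥤ H}
    (h : q ⋙ f₁ = q ⋙ f₂) : f₁ = f₂ :=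
  (hq.2 H inferInstance (q ⋙ f₂) fun γ => congrArg (· ⋙ f₂) (hq.1 γ)).unique h rfl

noncomputable def equivalence (hq : IsOrbitGroupoid φ q) {Q' : Type} [Groupoid.{0} Q']
    {q' : G ⥤ Q'} (hq' : IsOrbitGroupoid φ q') : Q ≌ Q' :=
  CategoryTheory.Equivalence.mk (hq.desc q' hq'.1) (hq'.desc q hq.1)
    (eqToIso <| hq.hom_ext <| by rw [← Functor.assoc, hq.fac, hq'.fac, Functor.comp_id])
    (eqToIso <| hq'.hom_ext <| by rw [← Functor.assoc, hq'.fac, hq.fac, Functor.comp_id])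

end IsOrbitGroupoid

noncomputable def CategoryTheory.Equivalence.vertexGroupEquiv {C D : Type*} [Groupoid C]
    [Groupoid D] (e : C ≌ D) (x : C) : (x ⟶ x) ≃* (e.functor.obj x ⟶ e.functor.obj x) :=
  MulEquiv.ofBijective (e.functor.mapVertexGroup x)
    ⟨e.functor.map_injective, e.functor.map_surjective⟩

def ConstHomGroupoid (T _Γ : Type) : Type := T

namespace ConstHomGroupoid

variable {T Γ : Type} [Group Γ]

instance : Groupoid (ConstHomGroupoid T Γ) where
  Hom _ _ := Γ
  id _ := (1 : Γ)
  comp f g := (f * g : Γ)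
  id_comp := one_mul
  comp_id := mul_one
  assoc := mul_assoc
  inv f := (f⁻¹ : Γ)
  inv_comp := inv_mul_cancel
  comp_inv := mul_inv_cancel

def vertexGroupEquiv (a : ConstHomGroupoid T Γ) : (a ⟶ a) ≃* Γ := MulEquiv.refl Γ

theorem eqToHom_eq_one {a b : ConstHomGroupoid T Γ} (h : a = b) : eqToHom h = (1 : Γ) := by
  subst h; rfl

theorem map_heq {H : Type*} [Category H] (F : ConstHomGroupoid T Γ ⥤ H) (γ : Γ)
    {a a' b b' : ConstHomGroupoid T Γ} (ha : a = a') (hb : b = b') :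
    F.map (X := a) (Y := b) γ ≍ F.map (X := a') (Y := b') γ := by
  subst ha hb; rfl

end ConstHomGroupoid

section Action

variable {Gt : Type} [Groupoid.{0} Gt]

instance : MulAction (Aut (Cat.of Gt)) Gt where
  smul a x := a.hom.toFunctor.obj x
  one_smul _ := rfl
  mul_smul _ _ _ := rfl

theorem FreeGroupoidAction.smul_left_injective {PP : Subgroup (Aut (Cat.of Gt))}
    (hfree : FreeGroupoidAction PP.subtype) (x : Gt) :
    Function.Injective fun γ : PP => γ • x := by
  intro γ δ h
  by_contra hne
  refine hfree (δ⁻¹ * γ) (by rwa [ne_eq, inv_mul_eq_one, eq_comm]) x ?_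
  change (δ⁻¹ * γ) • x = x
  rw [mul_smul, show γ • x = δ • x from h, inv_smul_smul]

theorem CategoryTheory.Functor.eq_id_of_obj_eq_self {C : Type*} [Category C] [Quiver.IsThin C]
    {F : C ⥤ C} (h : ∀ x, F.obj x = x) : F = 𝟭 C :=
  Functor.ext h fun _ _ _ => Subsingleton.elim _ _

theorem Aut.eq_one_of_forall_smul_eq_self [Quiver.IsThin Gt] {a : Aut (Cat.of Gt)}
    (h : ∀ x : Gt, a • x = x) : a = 1 :=
  Iso.ext (Cat.Hom.ext (Functor.eq_id_of_obj_eq_self (C := Gt) h))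

end Action

section Covering

variable {Gt G : Type} [Groupoid.{0} Gt] [Groupoid.{0} G] {p : Gt ⥤ G}

theorem IsCoveringProjection.obj_eq_self_of_comp_eq (hp : IsCoveringProjection p)
    (hconn : IsConnectedGroupoid Gt) {F : Gt ⥤ Gt} (hF : F ⋙ p = p) {x : Gt}
    (hx : F.obj x = x) (y : Gt) : F.obj y = y := by
  obtain ⟨k⟩ := hconn y x
  have hlift : costarMap p x ⟨F.obj y, F.map k ≫ eqToHom hx⟩ = costarMap p x ⟨y, k⟩ := by
    refine Sigma.ext (Functor.congr_obj hF y) ?_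
    simp only [costarMap, Functor.map_comp, eqToHom_map]
    exact (comp_eqToHom_heq _ _).trans (Functor.hcongr_hom hF k)
  exact congrArg Sigma.fst ((hp x).1 hlift)

theorem IsUniversalCovering.isThin (hp : IsUniversalCovering p) : Quiver.IsThin Gt :=
  fun x _ => ⟨fun f g => (comp_inv_eq_id g).1 (hp.2.2.2 x (f ≫ inv g))⟩

theorem IsUniversalCovering.freeGroupoidAction (hp : IsUniversalCovering p)
    {PP : Subgroup (Aut (Cat.of Gt))} (hPP : PP ≤ covGroup p) :
    FreeGroupoidAction PP.subtype := by
  have := hp.isThin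
  intro γ hγ x hx
  refine hγ (Subtype.ext (Aut.eq_one_of_forall_smul_eq_self fun y => ?_))
  exact hp.1.obj_eq_self_of_comp_eq hp.2.1 (hPP γ.2) hx y

end Covering

noncomputable def IsConnectedGroupoid.arrow {C : Type*} [Groupoid C]
    (hconn : IsConnectedGroupoid C) (x y : C) : x ⟶ y :=
  (hconn x y).some

abbrev OrbitGroupoid {Gt : Type} [Groupoid.{0} Gt] (PP : Subgroup (Aut (Cat.of Gt))) : Type :=
  ConstHomGroupoid (MulAction.orbitRel.Quotient PP Gt) PP

namespace OrbitGroupoid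

variable {Gt : Type} [Groupoid.{0} Gt] {PP : Subgroup (Aut (Cat.of Gt))}

def mk (x : Gt) : OrbitGroupoid PP := Quotient.mk _ x

noncomputable def rep (a : OrbitGroupoid PP) : Gt := Quotient.out a

theorem mk_rep (a : OrbitGroupoid PP) : mk (rep a) = a := Quotient.out_eq a

theorem mk_smul (γ : PP) (x : Gt) : (mk (γ • x) : OrbitGroupoid PP) = mk x :=
  Quotient.sound (MulAction.mem_orbit x γ)

theorem exists_smul_eq_rep (x : Gt) : ∃ γ : PP, γ • x = rep (mk x : OrbitGroupoid PP) :=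
  Quotient.mk_out (s := MulAction.orbitRel PP Gt) x

variable (PP) in
noncomputable def toRep (x : Gt) : PP := (exists_smul_eq_rep x).choose

variable (PP) in
theorem toRep_smul_self (x : Gt) : toRep PP x • x = rep (mk x : OrbitGroupoid PP) :=
  (exists_smul_eq_rep x).choose_spec

theorem toRep_smul (hfree : FreeGroupoidAction PP.subtype) (γ : PP) (x : Gt) :
    toRep PP (γ • x) = toRep PP x * γ⁻¹ :=
  hfree.smul_left_injective (γ • x) <| by
    simp only [toRep_smul_self, mk_smul, mul_smul, inv_smul_smul]

theorem toRep_rep (hfree : FreeGroupoidAction PP.subtype) (a : OrbitGroupoid PP) :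
    toRep PP (rep a) = 1 :=
  hfree.smul_left_injective (rep a) <| by
    change toRep PP (rep a) • rep a = (1 : PP) • rep a
    rw [toRep_smul_self, mk_rep, one_smul]

variable (PP) in
noncomputable def proj : Gt ⥤ OrbitGroupoid PP where
  obj := mk
  map {x y} _ := (toRep PP x * (toRep PP y)⁻¹ : PP)
  map_id x := mul_inv_cancel (toRep PP x)
  map_comp {x y z} _ _ := by
    change _ = toRep PP x * (toRep PP y)⁻¹ * (toRep PP y * (toRep PP z)⁻¹)
    group

theorem comp_proj (hfree : FreeGroupoidAction PP.subtype) (γ : PP) :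
    (PP.subtype γ).hom.toFunctor ⋙ proj PP = proj PP :=
  CategoryTheory.Functor.ext (fun x => mk_smul γ x) fun (x y : Gt) _ => by
    simp only [ConstHomGroupoid.eqToHom_eq_one]
    change toRep PP (γ • x) * (toRep PP (γ • y))⁻¹ =
      1 * (toRep PP x * (toRep PP y)⁻¹ * 1)
    rw [toRep_smul hfree, toRep_smul hfree]
    group

theorem hom_ext (hconn : IsConnectedGroupoid Gt) (hfree : FreeGroupoidAction PP.subtype)
    {H : Type} [Groupoid.{0} H] {f₁ f₂ : OrbitGroupoid PP ⥤ H}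
    (h : proj PP ⋙ f₁ = proj PP ⋙ f₂) : f₁ = f₂ := by
  refine Functor.hext (fun a => by rw [← mk_rep a]; exact Functor.congr_obj h (rep a)) ?_
  intro a b (γ : PP)
  let k := hconn.arrow (rep a) (γ • rep b)
  have hk : (proj PP).map k = (γ : mk (rep a) ⟶ mk (γ • rep b)) := by
    change toRep PP (rep a) * (toRep PP (γ • rep b))⁻¹ = γ
    rw [toRep_rep hfree, toRep_smul hfree, toRep_rep hfree]
    group
  have hmap := Functor.hcongr_hom h k
  change f₁.map ((proj PP).map k) ≍ f₂.map ((proj PP).map k) at hmap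
  rw [hk] at hmap
  have ha : a = mk (rep a) := (mk_rep a).symm
  have hb : b = mk (γ • rep b) := by rw [mk_smul, mk_rep]
  exact (ConstHomGroupoid.map_heq f₁ γ ha hb).trans
    (hmap.trans (ConstHomGroupoid.map_heq f₂ γ ha hb).symm)

section Desc

variable (hconn : IsConnectedGroupoid Gt) {H : Type} [Groupoid.{0} H] {f : Gt ⥤ H}

theorem obj_smul_eq (hf : ∀ γ : PP, (PP.subtype γ).hom.toFunctor ⋙ f = f) (γ : PP) (x : Gt) :
    f.obj (γ • x) = f.obj x :=
  Functor.congr_obj (hf γ) x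

theorem map_arrow_heq {x x' y y' : Gt} (hx : x = x') (hy : y = y') :
    f.map (hconn.arrow x y) ≍ f.map (hconn.arrow x' y') := by
  subst hx hy; rfl

variable [Quiver.IsThin Gt]

theorem map_arrow_smul_heq (hf : ∀ γ : PP, (PP.subtype γ).hom.toFunctor ⋙ f = f) (γ : PP)
    (x y : Gt) : f.map (hconn.arrow (γ • x) (γ • y)) ≍ f.map (hconn.arrow x y) := by
  rw [Subsingleton.elim (hconn.arrow (γ • x) (γ • y))
    ((PP.subtype γ).hom.toFunctor.map (hconn.arrow x y))]
  exact Functor.hcongr_hom (hf γ) _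

theorem map_arrow_smul (hf : ∀ γ : PP, (PP.subtype γ).hom.toFunctor ⋙ f = f) (γ : PP)
    (x y : Gt) :
    f.map (hconn.arrow x y) = eqToHom (obj_smul_eq hf γ x).symm ≫
      f.map (hconn.arrow (γ • x) (γ • y)) ≫ eqToHom (obj_smul_eq hf γ y) :=
  (conj_eqToHom_iff_heq _ _ (obj_smul_eq hf γ x).symm (obj_smul_eq hf γ y).symm).2
    (map_arrow_smul_heq hconn hf γ x y).symm

theorem map_arrow_comp (x y z : Gt) :
    f.map (hconn.arrow x y) ≫ f.map (hconn.arrow y z) = f.map (hconn.arrow x z) := by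
  rw [← f.map_comp, Subsingleton.elim (hconn.arrow x y ≫ hconn.arrow y z)]

noncomputable def desc (f : Gt ⥤ H) (hf : ∀ γ : PP, (PP.subtype γ).hom.toFunctor ⋙ f = f) :
    OrbitGroupoid PP ⥤ H where
  obj a := f.obj (rep a)
  map {a b} (γ : PP) := f.map (hconn.arrow (rep a) (γ • rep b)) ≫
    eqToHom (obj_smul_eq hf γ (rep b))
  map_id a := by
    change f.map (hconn.arrow (rep a) (rep a)) ≫ _ = _
    rw [Subsingleton.elim (hconn.arrow (rep a) (rep a)) (𝟙 _), f.map_id, Category.id_comp]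
    exact eqToHom_refl _ _
  map_comp {a b c} (γ δ : PP) := by
    change f.map (hconn.arrow (rep a) (γ • δ • rep c)) ≫ _ = _
    rw [map_arrow_smul hconn hf γ (rep b)]
    simp only [Category.assoc, eqToHom_trans_assoc, eqToHom_refl, Category.id_comp]
    rw [reassoc_of% map_arrow_comp, eqToHom_trans]

theorem proj_comp_desc (hf : ∀ γ : PP, (PP.subtype γ).hom.toFunctor ⋙ f = f) :
    proj PP ⋙ desc hconn f hf = f := by
  refine Functor.hext (fun x => ?_) fun x y k => ?_
  · change f.obj (rep (mk x)) = f.obj x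
    rw [← toRep_smul_self PP x]
    exact obj_smul_eq hf _ x
  · change f.map (hconn.arrow (rep (mk x)) ((toRep PP x * (toRep PP y)⁻¹) • rep (mk y))) ≫
      eqToHom _ ≍ f.map k
    have hx : rep (mk x) = toRep PP x • x := (toRep_smul_self PP x).symm
    have hy : (toRep PP x * (toRep PP y)⁻¹) • rep (mk y : OrbitGroupoid PP) =
        toRep PP x • y := by
      rw [← toRep_smul_self PP y, mul_smul, inv_smul_smul]
    refine (comp_eqToHom_heq _ _).trans ((map_arrow_heq hconn hx hy).trans ?_)
    rw [Subsingleton.elim k (hconn.arrow x y)]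
    exact map_arrow_smul_heq hconn hf _ x y

end Desc

theorem isOrbitGroupoid_proj [Quiver.IsThin Gt] (hconn : IsConnectedGroupoid Gt)
    (hfree : FreeGroupoidAction PP.subtype) : IsOrbitGroupoid PP.subtype (proj PP) :=
  ⟨comp_proj hfree, fun _ _ f hf => ⟨desc hconn f hf, proj_comp_desc hconn hf,
    fun _ hg => hom_ext hconn hfree (hg.trans (proj_comp_desc hconn hf).symm)⟩⟩

end OrbitGroupoid

theorem fundamental_group_of_orbit_groupoid {Gt G : Type}
    [Groupoid.{0} Gt] [Groupoid.{0} G]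
    (p : Gt ⥤ G) (hp : IsUniversalCovering p)
    (PP : Subgroup (Aut (Cat.of Gt))) (hPP : PP ≤ covGroup p)
    {Q : Type} [Groupoid.{0} Q] (s : Gt ⥤ Q)
    (hs : IsOrbitGroupoid PP.subtype s) :
    ∀ x : Q, Nonempty ((x ⟶ x) ≃* PP) := by
  have := hp.isThin
  let e := hs.equivalence (OrbitGroupoid.isOrbitGroupoid_proj hp.2.1 (hp.freeGroupoidAction hPP))
  exact fun x => ⟨(e.vertexGroupEquiv x).trans (ConstHomGroupoid.vertexGroupEquiv _)⟩
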